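/- For any real numbers α ≥ β > 0 and all x, x̃ ∈ ℝ^d: α·(1/n)∑_{i=1}^n ‖∇f_i(x) − ∇f(x) − ∇f_i(x̃) + ∇f(x̃)‖² − β·(1/n)∑_{i=1}^n ‖∇f_i(x) − ∇f_i(x̃)‖² ≤ 4L(α−β)·[F(x) − F(x*) + F(x̃) − F(x*)]. -/

import Mathlib

open scoped BigOperators RealInnerProductSpace

set_option linter.unusedSectionVars false

variable {E : Type*} [NormedAddCommGroup E] [InnerProductSpace ℝ E] [CompleteSpace E]

lemma descent_lemma' {h : E → ℝ} {G : E → E} {L : ℝ} (hL : 0 < L)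
    (hgrad : ∀ z, HasGradientAt h (G z) z)
    (hLip : ∀ z w, ‖G z - G w‖ ≤ L * ‖z - w‖) (x y : E) :
    h y ≤ h x + ⟪G x, y - x⟫ + L / 2 * ‖y - x‖ ^ 2 := by
  set v := y - x with hv
  have hGcont : Continuous G := by
    have : LipschitzWith (Real.toNNReal L) G := by
      apply LipschitzWith.of_dist_le_mul
      intro a b
      rw [dist_eq_norm, dist_eq_norm, Real.coe_toNNReal _ hL.le]
      exact hLip a b
    exact this.continuous
  have hderiv : ∀ t : ℝ, HasDerivAt (fun t : ℝ => h (x + t • v)) ⟪G (x + t • v), v⟫ t := by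
    intro t
    have h1 : HasFDerivAt h (InnerProductSpace.toDual ℝ E (G (x + t • v))) (x + t • v) :=
      hgrad (x + t • v)
    have h2 : HasDerivAt (fun t : ℝ => x + t • v) v t := by
      simpa using ((hasDerivAt_id t).smul_const v).const_add x
    have := h1.comp_hasDerivAt t h2
    simpa [InnerProductSpace.toDual_apply_apply, Function.comp_def] using this
  have hcont : Continuous fun t : ℝ => ⟪G (x + t • v), v⟫ :=
    Continuous.inner (hGcont.comp (by continuity)) continuous_const
  have hcont2 : Continuous fun t : ℝ => ⟪G x, v⟫ + L * t * ‖v‖ ^ 2 := by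
    continuity
  have hftc : ∫ t in (0:ℝ)..1, ⟪G (x + t • v), v⟫ = h (x + (1:ℝ) • v) - h (x + (0:ℝ) • v) :=
    intervalIntegral.integral_eq_sub_of_hasDerivAt
      (fun t _ => hderiv t) (hcont.intervalIntegrable 0 1)
  have heq : h y - h x = ∫ t in (0:ℝ)..1, ⟪G (x + t • v), v⟫ := by
    rw [hftc]; simp [hv]
  have hbound : ∫ t in (0:ℝ)..1, ⟪G (x + t • v), v⟫ ≤
      ∫ t in (0:ℝ)..1, (⟪G x, v⟫ + L * t * ‖v‖ ^ 2) := by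
    apply intervalIntegral.integral_mono_on (by norm_num)
      (hcont.intervalIntegrable 0 1) (hcont2.intervalIntegrable 0 1)
    intro t ht
    rw [Set.mem_Icc] at ht
    have hsub : ⟪G (x + t • v), v⟫ - ⟪G x, v⟫ = ⟪G (x + t • v) - G x, v⟫ := by
      rw [inner_sub_left]
    have hcs : ⟪G (x + t • v) - G x, v⟫ ≤ ‖G (x + t • v) - G x‖ * ‖v‖ :=
      real_inner_le_norm _ _
    have hlip' : ‖G (x + t • v) - G x‖ ≤ L * (t * ‖v‖) := by
      have := hLip (x + t • v) x
      simpa [norm_smul, abs_of_nonneg ht.1] using this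
    nlinarith [norm_nonneg v, mul_le_mul_of_nonneg_right hlip' (norm_nonneg v)]
  have hint : ∫ t in (0:ℝ)..1, (⟪G x, v⟫ + L * t * ‖v‖ ^ 2) = ⟪G x, v⟫ + L / 2 * ‖v‖ ^ 2 := by
    have e1 : (fun t : ℝ => ⟪G x, v⟫ + L * t * ‖v‖ ^ 2)
        = fun t : ℝ => ⟪G x, v⟫ + (L * ‖v‖ ^ 2) * t := by
      funext t; ring
    rw [e1, intervalIntegral.integral_add (intervalIntegrable_const)
      ((by fun_prop : Continuous fun t : ℝ => (L * ‖v‖ ^ 2) * t).intervalIntegrable 0 1),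
      intervalIntegral.integral_const_mul]
    simp [integral_id]
    ring
  linarith [heq, hbound, hint.le, hint.ge]

lemma grad_lower {h : E → ℝ} {G : E → E} {L : ℝ} (hL : 0 < L)
    (hconv : ConvexOn ℝ Set.univ h)
    (hgrad : ∀ z, HasGradientAt h (G z) z)
    (hLip : ∀ z w, ‖G z - G w‖ ≤ L * ‖z - w‖) (x y : E) :
    h x + ⟪G x, y - x⟫ ≤ h y := by
  set v := y - x with hv
  have key : ∀ t : ℝ, 0 < t → t ≤ 1 →
      ⟪G x, v⟫ ≤ h y - h x + (3 * L * t / 2) * ‖v‖ ^ 2 := by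
    intro t ht0 ht1
    have hcx : h (x + t • v) ≤ (1 - t) * h x + t * h y := by
      have := hconv.2 (Set.mem_univ x) (Set.mem_univ y) (by linarith : (0:ℝ) ≤ 1 - t)
        ht0.le (by ring : (1 - t) + t = 1)
      have hpt : (1 - t) • x + t • y = x + t • v := by
        rw [hv]; module
      rwa [hpt] at this
    have hdesc : h x ≤ h (x + t • v) + ⟪G (x + t • v), x - (x + t • v)⟫ +
        L / 2 * ‖x - (x + t • v)‖ ^ 2 := descent_lemma' hL hgrad hLip (x + t • v) x
    have e1 : ⟪G (x + t • v), x - (x + t • v)⟫ = -t * ⟪G (x + t • v), v⟫ := by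
      have : x - (x + t • v) = (-t) • v := by module
      rw [this, real_inner_smul_right]
    have e2 : ‖x - (x + t • v)‖ ^ 2 = t ^ 2 * ‖v‖ ^ 2 := by
      have : x - (x + t • v) = (-t) • v := by module
      rw [this, norm_smul]; simp [abs_of_pos ht0, mul_pow]
    have hclose : ⟪G x, v⟫ ≤ ⟪G (x + t • v), v⟫ + L * t * ‖v‖ ^ 2 := by
      have hcs : ⟪G x - G (x + t • v), v⟫ ≤ ‖G x - G (x + t • v)‖ * ‖v‖ :=
        real_inner_le_norm _ _
      have hlip' : ‖G x - G (x + t • v)‖ ≤ L * (t * ‖v‖) := by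
        have := hLip x (x + t • v)
        have e : x - (x + t • v) = (-t) • v := by module
        rw [e] at this
        simpa [norm_smul, abs_of_pos ht0] using this
      have := inner_sub_left (𝕜 := ℝ) (G x) (G (x + t • v)) v
      nlinarith [norm_nonneg v, mul_le_mul_of_nonneg_right hlip' (norm_nonneg v)]
    rw [e1, e2] at hdesc
    -- from hdesc: t * ⟪G(x+tv),v⟫ ≤ h(x+tv) - h x + L/2 t² ‖v‖²
    -- hcx : h(x+tv) - h x ≤ t (h y - h x)
    have h3 : t * ⟪G (x + t • v), v⟫ ≤ t * (h y - h x) + L / 2 * t ^ 2 * ‖v‖ ^ 2 := by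
      nlinarith
    have h4 : t * ⟪G x, v⟫ ≤ t * (h y - h x) + L / 2 * t ^ 2 * ‖v‖ ^ 2 + t * (L * t * ‖v‖ ^ 2) := by
      nlinarith [mul_le_mul_of_nonneg_left hclose ht0.le]
    have := (mul_le_mul_iff_right₀ ht0).mp (by nlinarith : t * ⟪G x, v⟫ ≤ t * (h y - h x + (3 * L * t / 2) * ‖v‖ ^ 2))
    linarith [this]
  rcases eq_or_ne (‖v‖) 0 with hz | hz
  · have h0 := key 1 one_pos le_rfl
    rw [hz] at h0
    linarith
  · have hvpos : 0 < ‖v‖ ^ 2 := by positivity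
    have : ∀ ε > 0, h x + ⟪G x, v⟫ ≤ h y + ε := by
      intro ε hε
      set t := min 1 (ε / ((3 * L / 2) * ‖v‖ ^ 2)) with htdef
      have htpos : 0 < t := lt_min one_pos (by positivity)
      have ht1 : t ≤ 1 := min_le_left _ _
      have h0 := key t htpos ht1
      have : (3 * L * t / 2) * ‖v‖ ^ 2 ≤ ε := by
        have h2 : t ≤ ε / ((3 * L / 2) * ‖v‖ ^ 2) := min_le_right _ _
        have h3 : (3 * L / 2) * ‖v‖ ^ 2 > 0 := by positivity
        calc (3 * L * t / 2) * ‖v‖ ^ 2 = t * ((3 * L / 2) * ‖v‖ ^ 2) := by ring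
          _ ≤ (ε / ((3 * L / 2) * ‖v‖ ^ 2)) * ((3 * L / 2) * ‖v‖ ^ 2) :=
              mul_le_mul_of_nonneg_right h2 h3.le
          _ = ε := by field_simp
      linarith
    linarith [le_of_forall_pos_le_add this]

lemma coco' {h : E → ℝ} {G : E → E} {L : ℝ} (hL : 0 < L)
    (hconv : ConvexOn ℝ Set.univ h)
    (hgrad : ∀ z, HasGradientAt h (G z) z)
    (hLip : ∀ z w, ‖G z - G w‖ ≤ L * ‖z - w‖) (x y : E) :
    ‖G x - G y‖ ^ 2 ≤ 2 * L * (h x - h y - ⟪G y, x - y⟫) := by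
  set w := (-(L⁻¹)) • (G x - G y) with hw
  have hdesc : h (x + w) ≤ h x + ⟪G x, w⟫ + L / 2 * ‖w‖ ^ 2 := by
    have := descent_lemma' hL hgrad hLip x (x + w)
    simpa using this
  have hlow : h y + ⟪G y, (x + w) - y⟫ ≤ h (x + w) := grad_lower hL hconv hgrad hLip y (x + w)
  have e0 : ⟪G y, (x + w) - y⟫ = ⟪G y, x - y⟫ + ⟪G y, w⟫ := by
    have : (x + w) - y = (x - y) + w := by module
    rw [this, inner_add_right]
  have e1 : ⟪G x, w⟫ - ⟪G y, w⟫ = -(L⁻¹) * ‖G x - G y‖ ^ 2 := by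
    rw [hw, real_inner_smul_right, real_inner_smul_right]
    rw [← mul_sub, ← inner_sub_left, real_inner_self_eq_norm_sq]
  have e2 : ‖w‖ ^ 2 = (L⁻¹) ^ 2 * ‖G x - G y‖ ^ 2 := by
    rw [hw, norm_smul]
    simp
    rw [abs_of_pos hL]
    ring
  have hLi : L * L⁻¹ = 1 := mul_inv_cancel₀ hL.ne'
  have key2 : ⟪G y, x - y⟫ + L⁻¹ / 2 * ‖G x - G y‖ ^ 2 ≤ h x - h y := by
    have e3 : -(L⁻¹) * ‖G x - G y‖ ^ 2 + L / 2 * (L⁻¹ ^ 2 * ‖G x - G y‖ ^ 2)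
        = -(L⁻¹ / 2 * ‖G x - G y‖ ^ 2) := by
      field_simp
      ring
    nlinarith
  have hmul := mul_le_mul_of_nonneg_left key2 (by positivity : (0:ℝ) ≤ 2 * L)
  have e4 : 2 * L * (L⁻¹ / 2 * ‖G x - G y‖ ^ 2) = ‖G x - G y‖ ^ 2 := by
    field_simp
  nlinarith [hmul, e4]

section Avg

variable {n : ℕ} {f : Fin n → E → ℝ} {g : Fin n → E → E} {L : ℝ}

lemma inner_gf {gf : E → E} (hgf : ∀ x, gf x = (n : ℝ)⁻¹ • ∑ i, g i x) (z w : E) :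
    ⟪gf z, w⟫ = (n : ℝ)⁻¹ * ⟪∑ i, g i z, w⟫ := by
  rw [hgf, real_inner_smul_left]

lemma avg_descent (hn : 0 < n) (hL : 0 < L)
    (hgrad : ∀ i x, HasGradientAt (f i) (g i x) x)
    (hLip : ∀ i x y, ‖g i x - g i y‖ ≤ L * ‖x - y‖)
    {gf : E → E} (hgf : ∀ x, gf x = (n : ℝ)⁻¹ • ∑ i, g i x) (z w : E) :
    (n : ℝ)⁻¹ * ∑ i, f i w ≤
      (n : ℝ)⁻¹ * ∑ i, f i z + ⟪gf z, w - z⟫ + L / 2 * ‖w - z‖ ^ 2 := by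
  have hn' : (0:ℝ) < n := Nat.cast_pos.mpr hn
  have hsum : ∑ i, f i w ≤ ∑ i, (f i z + ⟪g i z, w - z⟫ + L / 2 * ‖w - z‖ ^ 2) :=
    Finset.sum_le_sum fun i _ => descent_lemma' hL (hgrad i) (hLip i) z w
  rw [Finset.sum_add_distrib, Finset.sum_add_distrib, ← sum_inner, Finset.sum_const,
    Finset.card_univ, Fintype.card_fin, nsmul_eq_mul] at hsum
  have := mul_le_mul_of_nonneg_left hsum (by positivity : (0:ℝ) ≤ (n:ℝ)⁻¹)
  rw [inner_gf hgf]
  have hni : (n:ℝ)⁻¹ * ((n:ℝ) * (L / 2 * ‖w - z‖ ^ 2)) = L / 2 * ‖w - z‖ ^ 2 := by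
    field_simp
  nlinarith [this]

lemma avg_coco (hn : 0 < n) (hL : 0 < L)
    (hconv : ∀ i, ConvexOn ℝ Set.univ (f i))
    (hgrad : ∀ i x, HasGradientAt (f i) (g i x) x)
    (hLip : ∀ i x y, ‖g i x - g i y‖ ≤ L * ‖x - y‖)
    {gf : E → E} (hgf : ∀ x, gf x = (n : ℝ)⁻¹ • ∑ i, g i x) (z w : E) :
    (n : ℝ)⁻¹ * ∑ i, ‖g i z - g i w‖ ^ 2 ≤
      2 * L * ((n : ℝ)⁻¹ * ∑ i, f i z - (n : ℝ)⁻¹ * ∑ i, f i w - ⟪gf w, z - w⟫) := by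
  have hn' : (0:ℝ) < n := Nat.cast_pos.mpr hn
  have hsum : ∑ i, ‖g i z - g i w‖ ^ 2 ≤
      ∑ i, (2 * L * (f i z - f i w - ⟪g i w, z - w⟫)) :=
    Finset.sum_le_sum fun i _ => coco' hL (hconv i) (hgrad i) (hLip i) z w
  rw [← Finset.mul_sum] at hsum
  have h2 : ∑ i, (f i z - f i w - ⟪g i w, z - w⟫)
      = ∑ i, f i z - ∑ i, f i w - ⟪∑ i, g i w, z - w⟫ := by
    rw [Finset.sum_sub_distrib, Finset.sum_sub_distrib, sum_inner]
  rw [h2] at hsum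
  have := mul_le_mul_of_nonneg_left hsum (by positivity : (0:ℝ) ≤ (n:ℝ)⁻¹)
  rw [inner_gf hgf]
  nlinarith [this]

lemma variance_le (hn : 0 < n) {gf : E → E}
    (hgf : ∀ x, gf x = (n : ℝ)⁻¹ • ∑ i, g i x) (x xt : E) :
    ∑ i, ‖g i x - gf x - g i xt + gf xt‖ ^ 2 ≤ ∑ i, ‖g i x - g i xt‖ ^ 2 := by
  have hn' : (0:ℝ) < n := Nat.cast_pos.mpr hn
  set a : Fin n → E := fun i => g i x - g i xt with ha
  set m : E := gf x - gf xt with hmdef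
  have hm : (n:ℝ) • m = ∑ i, a i := by
    rw [hmdef, hgf, hgf, smul_sub, smul_smul, smul_smul, mul_inv_cancel₀ hn'.ne',
      one_smul, one_smul, ha]
    rw [Finset.sum_sub_distrib]
  have hterm : ∀ i, g i x - gf x - g i xt + gf xt = a i - m := by
    intro i; rw [ha, hmdef]; beta_reduce; abel
  calc ∑ i, ‖g i x - gf x - g i xt + gf xt‖ ^ 2
      = ∑ i, (‖a i‖ ^ 2 - 2 * ⟪a i, m⟫ + ‖m‖ ^ 2) := by
        refine Finset.sum_congr rfl fun i _ => ?_
        rw [hterm i, @norm_sub_sq_real]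
    _ = ∑ i, ‖a i‖ ^ 2 - 2 * ⟪∑ i, a i, m⟫ + (n:ℝ) * ‖m‖ ^ 2 := by
        rw [Finset.sum_add_distrib, Finset.sum_sub_distrib, sum_inner, Finset.mul_sum,
          Finset.sum_const, Finset.card_univ, Fintype.card_fin, nsmul_eq_mul]
    _ = ∑ i, ‖a i‖ ^ 2 - (n:ℝ) * ‖m‖ ^ 2 := by
        rw [← hm, real_inner_smul_left, real_inner_self_eq_norm_sq]
        ring
    _ ≤ ∑ i, ‖a i‖ ^ 2 := by nlinarith [sq_nonneg ‖m‖]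

lemma optimality (hn : 0 < n) (hL : 0 < L)
    (hgrad : ∀ i x, HasGradientAt (f i) (g i x) x)
    (hLip : ∀ i x y, ‖g i x - g i y‖ ≤ L * ‖x - y‖)
    {r : E → ℝ} (hr : ConvexOn ℝ Set.univ r)
    {F : E → ℝ} (hF : ∀ x, F x = (n : ℝ)⁻¹ * ∑ i, f i x + r x)
    {gf : E → E} (hgf : ∀ x, gf x = (n : ℝ)⁻¹ • ∑ i, g i x)
    {xstar : E} (hstar : ∀ x, F xstar ≤ F x) (z : E) :
    -⟪gf xstar, z - xstar⟫ ≤ r z - r xstar := by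
  set v := z - xstar with hv
  set q := ‖v‖ ^ 2 with hq
  have hqnn : 0 ≤ q := sq_nonneg _
  have key : ∀ t : ℝ, 0 < t → t ≤ 1 →
      -⟪gf xstar, v⟫ ≤ r z - r xstar + L * t / 2 * q := by
    intro t ht0 ht1
    have hFle := hstar (xstar + t • v)
    rw [hF, hF] at hFle
    have hdesc := avg_descent hn hL hgrad hLip hgf xstar (xstar + t • v)
    have e1 : (xstar + t • v) - xstar = t • v := by module
    rw [e1, real_inner_smul_right] at hdesc
    have e2 : ‖t • v‖ ^ 2 = t ^ 2 * q := by
      rw [norm_smul]; simp [abs_of_pos ht0, mul_pow, hq]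
    rw [e2] at hdesc
    have hrle : r (xstar + t • v) ≤ (1 - t) * r xstar + t * r z := by
      have := hr.2 (Set.mem_univ xstar) (Set.mem_univ z) (by linarith : (0:ℝ) ≤ 1 - t)
        ht0.le (by ring : (1 - t) + t = 1)
      have hpt : (1 - t) • xstar + t • z = xstar + t • v := by rw [hv]; module
      rwa [hpt] at this
    have h5 : 0 ≤ t * ⟪gf xstar, v⟫ + L / 2 * (t ^ 2 * q) + t * (r z - r xstar) := by
      linarith
    have h6 : t * (-⟪gf xstar, v⟫) ≤ t * (r z - r xstar + L * t / 2 * q) := by nlinarith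
    exact le_of_mul_le_mul_left (by linarith [h6]) ht0
  have : ∀ ε > 0, -⟪gf xstar, v⟫ ≤ r z - r xstar + ε := by
    intro ε hε
    set t := min 1 (2 * ε / (L * q + 1)) with htdef
    have hden : 0 < L * q + 1 := by positivity
    have ht0 : 0 < t := lt_min one_pos (by positivity)
    have ht1 : t ≤ 1 := min_le_left _ _
    have h0 := key t ht0 ht1
    have h2 : t ≤ 2 * ε / (L * q + 1) := min_le_right _ _
    have h3 : t * (L * q + 1) ≤ 2 * ε := by
      rw [div_eq_mul_inv] at h2
      calc t * (L * q + 1) ≤ (2 * ε * (L * q + 1)⁻¹) * (L * q + 1) :=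
            mul_le_mul_of_nonneg_right h2 hden.le
        _ = 2 * ε := by field_simp
    have : L * t / 2 * q ≤ ε := by nlinarith
    linarith
  linarith [le_of_forall_pos_le_add this]

end Avg

/-- Appendix corollary: for `α ≥ β > 0`,
`α·(1/n)∑ᵢ‖∇fᵢ(x) - ∇f(x) - ∇fᵢ(x̃) + ∇f(x̃)‖² - β·(1/n)∑ᵢ‖∇fᵢ(x) - ∇fᵢ(x̃)‖²
  ≤ 4L(α - β)[F(x) - F(x*) + F(x̃) - F(x*)]`. -/
theorem svrg_variance_bound_combined {d n : ℕ} (hn : 0 < n) (L : ℝ) (hL : 0 < L)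
    (f : Fin n → EuclideanSpace ℝ (Fin d) → ℝ)
    (g : Fin n → EuclideanSpace ℝ (Fin d) → EuclideanSpace ℝ (Fin d))
    (hconv : ∀ i, ConvexOn ℝ Set.univ (f i))
    (hgrad : ∀ i x, HasGradientAt (f i) (g i x) x)
    (hLip : ∀ i x y, ‖g i x - g i y‖ ≤ L * ‖x - y‖)
    (r : EuclideanSpace ℝ (Fin d) → ℝ) (hr : ConvexOn ℝ Set.univ r)
    (F : EuclideanSpace ℝ (Fin d) → ℝ)
    (hF : ∀ x, F x = (n : ℝ)⁻¹ * ∑ i, f i x + r x)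
    (gf : EuclideanSpace ℝ (Fin d) → EuclideanSpace ℝ (Fin d))
    (hgf : ∀ x, gf x = (n : ℝ)⁻¹ • ∑ i, g i x)
    (xstar : EuclideanSpace ℝ (Fin d)) (hstar : ∀ x, F xstar ≤ F x)
    (α β : ℝ) (hβ : 0 < β) (hαβ : β ≤ α)
    (x xt : EuclideanSpace ℝ (Fin d)) :
    α * ((n : ℝ)⁻¹ * ∑ i, ‖g i x - gf x - g i xt + gf xt‖ ^ 2) -
      β * ((n : ℝ)⁻¹ * ∑ i, ‖g i x - g i xt‖ ^ 2) ≤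
      4 * L * (α - β) * (F x - F xstar + (F xt - F xstar)) := by
  have hn' : (0:ℝ) < n := Nat.cast_pos.mpr hn
  have hinv : (0:ℝ) ≤ (n:ℝ)⁻¹ := by positivity
  -- bound on (1/n)∑‖g i z - g i x*‖² for any z
  have hA : ∀ z, (n : ℝ)⁻¹ * ∑ i, ‖g i z - g i xstar‖ ^ 2 ≤ 2 * L * (F z - F xstar) := by
    intro z
    have h1 := avg_coco hn hL hconv hgrad hLip hgf z xstar
    have h2 := optimality hn hL hgrad hLip hr hF hgf hstar z
    have h3 : F z - F xstar =
        (n : ℝ)⁻¹ * ∑ i, f i z - (n : ℝ)⁻¹ * ∑ i, f i xstar + (r z - r xstar) := by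
      rw [hF, hF]; ring
    nlinarith [h1, h2, h3]
  -- S bound
  have hS : (n : ℝ)⁻¹ * ∑ i, ‖g i x - g i xt‖ ^ 2 ≤
      4 * L * (F x - F xstar + (F xt - F xstar)) := by
    have hsplit : ∀ i : Fin n, ‖g i x - g i xt‖ ^ 2 ≤
        2 * ‖g i x - g i xstar‖ ^ 2 + 2 * ‖g i xt - g i xstar‖ ^ 2 := by
      intro i
      have e : g i x - g i xt = (g i x - g i xstar) - (g i xt - g i xstar) := by abel
      rw [e]
      have := norm_sub_le (g i x - g i xstar) (g i xt - g i xstar)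
      nlinarith [norm_nonneg (g i x - g i xstar), norm_nonneg (g i xt - g i xstar),
        norm_nonneg ((g i x - g i xstar) - (g i xt - g i xstar)),
        sq_nonneg (‖g i x - g i xstar‖ - ‖g i xt - g i xstar‖)]
    have hsum : ∑ i, ‖g i x - g i xt‖ ^ 2 ≤
        ∑ i, (2 * ‖g i x - g i xstar‖ ^ 2 + 2 * ‖g i xt - g i xstar‖ ^ 2) :=
      Finset.sum_le_sum fun i _ => hsplit i
    rw [Finset.sum_add_distrib, ← Finset.mul_sum, ← Finset.mul_sum] at hsum
    have := mul_le_mul_of_nonneg_left hsum hinv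
    nlinarith [hA x, hA xt]
  -- V ≤ S
  have hVS : (n : ℝ)⁻¹ * ∑ i, ‖g i x - gf x - g i xt + gf xt‖ ^ 2 ≤
      (n : ℝ)⁻¹ * ∑ i, ‖g i x - g i xt‖ ^ 2 :=
    mul_le_mul_of_nonneg_left (variance_le hn hgf x xt) hinv
  have hV0 : 0 ≤ (n : ℝ)⁻¹ * ∑ i, ‖g i x - gf x - g i xt + gf xt‖ ^ 2 := by positivity
  set V := (n : ℝ)⁻¹ * ∑ i, ‖g i x - gf x - g i xt + gf xt‖ ^ 2
  set S := (n : ℝ)⁻¹ * ∑ i, ‖g i x - g i xt‖ ^ 2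
  have hα : 0 ≤ α := le_trans hβ.le hαβ
  have h1 : α * V ≤ α * S := mul_le_mul_of_nonneg_left hVS hα
  have h2 : (α - β) * S ≤ (α - β) * (4 * L * (F x - F xstar + (F xt - F xstar))) :=
    mul_le_mul_of_nonneg_left hS (by linarith)
  nlinarith [h1, h2]
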